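/- arXiv:2509.17199 — 6 statements merged into one kernel-verified Lean document; each statement's English description precedes it below -/
import Mathlib

section
/- The random series S(b) := ∑_{k=1}^∞ b_k E_k converges almost surely if and only if the series ∑_{k=1}^∞ b_k converges. -/
/-!
If `∑ b_k < ∞`, then `E[∑ b_k E_k] = λ⁻¹ ∑ b_k < ∞`, so the nonnegative series converges almost
surely. Conversely, by independence
`E[exp (-∑_{k<n} b_k E_k)] = ∏_{k<n} λ / (λ + b_k) ≤ λ / (λ + ∑_{k<n} b_k)`,
which tends to `0` when `∑ b_k = ∞`. By Fatou's lemma `exp (-∑_{k<n} b_k E_k)` then has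
`liminf` equal to `0` almost surely, which is impossible wherever the series converges.
-/

open MeasureTheory ProbabilityTheory Real Set Filter Topology
open scoped ENNReal

lemma lintegral_ofReal_rpow_mul_exp_neg_mul_Ioi {a r : ℝ} (ha : 0 < a) (hr : 0 < r) :
    ∫⁻ t in Ioi 0, ENNReal.ofReal (t ^ (a - 1) * exp (-(r * t)))
      = ENNReal.ofReal ((1 / r) ^ a * Gamma a) := by
  have hpos : 0 < ∫ t in Ioi (0 : ℝ), t ^ (a - 1) * exp (-(r * t)) := by
    rw [integral_rpow_mul_exp_neg_mul_Ioi ha hr]; positivity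
  rw [← integral_rpow_mul_exp_neg_mul_Ioi ha hr, ofReal_integral_eq_lintegral_ofReal
    (Integrable.of_integral_ne_zero hpos.ne')]
  filter_upwards [ae_restrict_mem measurableSet_Ioi] with t (ht : 0 < t)
  positivity

lemma lintegral_expMeasure {r : ℝ} {f : ℝ → ℝ≥0∞} (hf : Measurable f) :
    ∫⁻ x, f x ∂expMeasure r = ∫⁻ x in Ioi 0, ENNReal.ofReal (r * exp (-(r * x))) * f x := by
  have hpdf : exponentialPDF r
      = (Ici 0).indicator fun x ↦ ENNReal.ofReal (r * exp (-(r * x))) := by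
    ext x
    by_cases hx : 0 ≤ x <;> simp [exponentialPDF_eq, hx]
  have hpdf_meas : Measurable (exponentialPDF r) := (measurable_exponentialPDFReal r).ennreal_ofReal
  change ∫⁻ x, f x ∂(volume.withDensity (exponentialPDF r)) = _
  rw [lintegral_withDensity_eq_lintegral_mul _ hpdf_meas hf,
    restrict_Ioi_eq_restrict_Ici, ← lintegral_indicator measurableSet_Ici, hpdf]
  simp_rw [Pi.mul_apply, indicator_mul_left]

lemma ae_nonneg_expMeasure (r : ℝ) : ∀ᵐ x ∂expMeasure r, 0 ≤ x := by
  simp only [ae_iff, not_le]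
  change volume.withDensity (exponentialPDF r) (Iio 0) = 0
  rw [withDensity_apply _ measurableSet_Iio, lintegral_exponentialPDF_of_nonpos le_rfl]

lemma lintegral_exp_neg_mul_expMeasure {r c : ℝ} (hr : 0 < r) (hrc : 0 < r + c) :
    ∫⁻ x, ENNReal.ofReal (exp (-(c * x))) ∂expMeasure r = ENNReal.ofReal (r / (r + c)) := by
  rw [lintegral_expMeasure (by fun_prop)]
  calc ∫⁻ x in Ioi 0, ENNReal.ofReal (r * exp (-(r * x))) * ENNReal.ofReal (exp (-(c * x)))
      = ∫⁻ x in Ioi 0,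
          ENNReal.ofReal r * ENNReal.ofReal (x ^ ((1 : ℝ) - 1) * exp (-((r + c) * x))) := by
        congr 1; ext x
        rw [sub_self, rpow_zero, one_mul, ← ENNReal.ofReal_mul hr.le,
          ← ENNReal.ofReal_mul (by positivity), mul_assoc, ← exp_add]
        ring_nf
    _ = ENNReal.ofReal (r / (r + c)) := by
        rw [lintegral_const_mul _ (by fun_prop),
          lintegral_ofReal_rpow_mul_exp_neg_mul_Ioi one_pos hrc, ← ENNReal.ofReal_mul hr.le]
        simp [div_eq_mul_inv]

lemma lintegral_ofReal_expMeasure {r : ℝ} (hr : 0 < r) :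
    ∫⁻ x, ENNReal.ofReal x ∂expMeasure r = ENNReal.ofReal r⁻¹ := by
  rw [lintegral_expMeasure ENNReal.measurable_ofReal]
  calc ∫⁻ x in Ioi 0, ENNReal.ofReal (r * exp (-(r * x))) * ENNReal.ofReal x
      = ∫⁻ x in Ioi 0,
          ENNReal.ofReal r * ENNReal.ofReal (x ^ ((2 : ℝ) - 1) * exp (-(r * x))) := by
        refine setLIntegral_congr_fun measurableSet_Ioi fun x (hx : 0 < x) ↦ ?_
        rw [show (2 : ℝ) - 1 = 1 by norm_num, rpow_one, ← ENNReal.ofReal_mul hr.le,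
          ← ENNReal.ofReal_mul (by positivity)]
        ring_nf
    _ = ENNReal.ofReal r⁻¹ := by
        rw [lintegral_const_mul _ (by fun_prop),
          lintegral_ofReal_rpow_mul_exp_neg_mul_Ioi two_pos hr, ← ENNReal.ofReal_mul hr.le]
        congr 1
        rw [Gamma_two, mul_one, rpow_two]
        field_simp

theorem Finset.one_add_sum_le_prod_one_add {ι R : Type*} [CommSemiring R] [PartialOrder R]
    [IsOrderedRing R] (s : Finset ι) {f : ι → R} (hf : ∀ i ∈ s, 0 ≤ f i) :
    1 + ∑ i ∈ s, f i ≤ ∏ i ∈ s, (1 + f i) := by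
  classical
  induction s using Finset.induction_on with
  | empty => simp
  | insert a s ha ih =>
    have hfa : 0 ≤ f a := hf a (mem_insert_self a s)
    have hsum : 0 ≤ ∑ i ∈ s, f i := sum_nonneg fun i hi ↦ hf i (mem_insert_of_mem hi)
    rw [sum_insert ha, prod_insert ha]
    calc 1 + (f a + ∑ i ∈ s, f i)
        ≤ (1 + f a) * (1 + ∑ i ∈ s, f i) := by
          rw [show (1 + f a) * (1 + ∑ i ∈ s, f i)
            = 1 + (f a + ∑ i ∈ s, f i) + f a * ∑ i ∈ s, f i by ring]
          exact le_add_of_nonneg_right (mul_nonneg hfa hsum)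
      _ ≤ (1 + f a) * ∏ i ∈ s, (1 + f i) :=
          mul_le_mul_of_nonneg_left (ih fun i hi ↦ hf i (mem_insert_of_mem hi))
            (add_nonneg zero_le_one hfa)

open Finset in
theorem tendsto_prod_div_add_of_not_summable {r : ℝ} (hr : 0 < r) {b : ℕ → ℝ}
    (hb : ∀ k, 0 ≤ b k) (hns : ¬ Summable b) :
    Tendsto (fun n ↦ ∏ k ∈ range n, r / (r + b k)) atTop (𝓝 0) := by
  have hfactor : ∀ k, r / (r + b k) = (1 + b k / r)⁻¹ := fun k ↦ by field_simp
  have hbound : ∀ n, ∏ k ∈ range n, r / (r + b k) ≤ (1 + (∑ k ∈ range n, b k) / r)⁻¹ := by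
    intro n
    simp_rw [hfactor, prod_inv_distrib, sum_div]
    exact inv_anti₀
      (add_pos_of_pos_of_nonneg one_pos (sum_nonneg fun k _ ↦ div_nonneg (hb k) hr.le))
      ((range n).one_add_sum_le_prod_one_add fun k _ ↦ div_nonneg (hb k) hr.le)
  have hsum : Tendsto (fun n ↦ ∑ k ∈ range n, b k) atTop atTop :=
    (not_summable_iff_tendsto_nat_atTop_of_nonneg hb).mp hns
  refine squeeze_zero (fun n ↦ prod_nonneg fun k _ ↦ div_nonneg hr.le (by linarith [hb k]))
    hbound (tendsto_inv_atTop_zero.comp ?_)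
  exact tendsto_atTop_add_const_left _ 1 (hsum.atTop_div_const hr)

theorem ae_liminf_eq_zero_of_tendsto_lintegral {α : Type*} [MeasurableSpace α] {μ : Measure α}
    {f : ℕ → α → ℝ≥0∞} (hf : ∀ n, Measurable (f n))
    (h : Tendsto (fun n ↦ ∫⁻ a, f n a ∂μ) atTop (𝓝 0)) :
    ∀ᵐ a ∂μ, liminf (fun n ↦ f n a) atTop = 0 := by
  have hfatou := lintegral_liminf_le hf (μ := μ) (u := atTop)
  rw [h.liminf_eq, nonpos_iff_eq_zero] at hfatou
  exact (lintegral_eq_zero_iff (.liminf hf)).mp hfatou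

theorem ae_not_summable_of_tendsto_prod_lintegral_exp_neg {Ω : Type*} [MeasurableSpace Ω]
    {μ : Measure Ω} {X : ℕ → Ω → ℝ} (hX : ∀ k, Measurable (X k)) (hind : iIndepFun X μ)
    (h : Tendsto (fun n ↦ ∏ k ∈ Finset.range n, ∫⁻ ω, ENNReal.ofReal (exp (-X k ω)) ∂μ)
      atTop (𝓝 0)) :
    ∀ᵐ ω ∂μ, ¬ Summable fun k ↦ X k ω := by
  set Y : ℕ → Ω → ℝ≥0∞ := fun k ω ↦ ENNReal.ofReal (exp (-X k ω))
  have hY : ∀ k, Measurable (Y k) := fun k ↦ by fun_prop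
  have hYind : iIndepFun Y μ := hind.comp (fun _ x ↦ ENNReal.ofReal (exp (-x))) fun _ ↦ by fun_prop
  have hprod : ∀ n, Measurable fun ω ↦ ∏ k ∈ Finset.range n, Y k ω :=
    fun n ↦ Finset.measurable_prod _ fun k _ ↦ hY k
  have hliminf := ae_liminf_eq_zero_of_tendsto_lintegral (μ := μ) hprod
    (by simpa only [lintegral_prod_eq_prod_lintegral_of_indepFun _ Y hYind hY] using h)
  filter_upwards [hliminf] with ω hω hsum
  have hpartial : ∀ n, ∏ k ∈ Finset.range n, Y k ω
      = ENNReal.ofReal (exp (-∑ k ∈ Finset.range n, X k ω)) := fun n ↦ by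
    rw [← ENNReal.ofReal_prod_of_nonneg fun k _ ↦ (exp_pos _).le, ← exp_sum,
      Finset.sum_neg_distrib]
  have hlim : Tendsto (fun n ↦ ∏ k ∈ Finset.range n, Y k ω) atTop
      (𝓝 (ENNReal.ofReal (exp (-∑' k, X k ω)))) := by
    simp_rw [hpartial]
    exact ENNReal.tendsto_ofReal
      ((continuous_exp.tendsto _).comp hsum.hasSum.tendsto_sum_nat.neg)
  rw [hlim.liminf_eq, ENNReal.ofReal_eq_zero] at hω
  exact (exp_pos _).not_ge hω

theorem ae_summable_of_tsum_lintegral_ne_top {Ω : Type*} [MeasurableSpace Ω] {μ : Measure Ω}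
    {X : ℕ → Ω → ℝ} (hX : ∀ k, AEMeasurable (X k) μ) (hnn : ∀ k, 0 ≤ᵐ[μ] X k)
    (h : ∑' k, ∫⁻ ω, ENNReal.ofReal (X k ω) ∂μ ≠ ∞) :
    ∀ᵐ ω ∂μ, Summable fun k ↦ X k ω := by
  have hmeas : ∀ k, AEMeasurable (fun ω ↦ ENNReal.ofReal (X k ω)) μ :=
    fun k ↦ (hX k).ennreal_ofReal
  rw [← lintegral_tsum hmeas] at h
  filter_upwards [ae_lt_top' (AEMeasurable.tsum hmeas) h, ae_all_iff.mpr hnn]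
    with ω hfin hω
  exact (ENNReal.summable_toReal hfin.ne).congr fun k ↦ ENNReal.toReal_ofReal (hω k)

section ExponentialSeries

variable {Ω : Type*} [MeasurableSpace Ω] {P : Measure Ω} {lam : ℝ} {E : ℕ → Ω → ℝ} {b : ℕ → ℝ}

theorem summable_of_ae_summable_mul_of_iIndepFun_expMeasure [IsProbabilityMeasure P]
    (hlam : 0 < lam) (hEmeas : ∀ k, Measurable (E k))
    (hEexp : ∀ k, Measure.map (E k) P = expMeasure lam) (hIndep : iIndepFun E P)
    (hb : ∀ k, 0 ≤ b k) (hae : ∀ᵐ ω ∂P, Summable fun k ↦ b k * E k ω) :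
    Summable b := by
  by_contra hns
  have hlaplace : ∀ k, ∫⁻ ω, ENNReal.ofReal (exp (-(b k * E k ω))) ∂P
      = ENNReal.ofReal (lam / (lam + b k)) := fun k ↦ by
    rw [← lintegral_map (f := fun x ↦ ENNReal.ofReal (exp (-(b k * x)))) (by fun_prop) (hEmeas k),
      hEexp k, lintegral_exp_neg_mul_expMeasure hlam (by linarith [hb k])]
  have hprod := ENNReal.tendsto_ofReal (tendsto_prod_div_add_of_not_summable hlam hb hns)
  rw [ENNReal.ofReal_zero] at hprod
  have hdiv := ae_not_summable_of_tendsto_prod_lintegral_exp_neg (X := fun k ω ↦ b k * E k ω)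
    (fun k ↦ (hEmeas k).const_mul (b k)) (hIndep.comp _ fun k ↦ measurable_const_mul (b k))
    (by simpa only [hlaplace, ENNReal.ofReal_prod_of_nonneg fun k _ ↦
      div_nonneg hlam.le (by linarith [hb k] : 0 ≤ lam + b k)] using hprod)
  obtain ⟨ω, hsum, hnsum⟩ := (hae.and hdiv).exists
  exact hnsum hsum

theorem ae_summable_mul_of_summable_of_map_eq_expMeasure (hlam : 0 < lam)
    (hEmeas : ∀ k, Measurable (E k)) (hEexp : ∀ k, Measure.map (E k) P = expMeasure lam)
    (hb : ∀ k, 0 ≤ b k) (hsum : Summable b) :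
    ∀ᵐ ω ∂P, Summable fun k ↦ b k * E k ω := by
  have hmean : ∀ k, ∫⁻ ω, ENNReal.ofReal (b k * E k ω) ∂P = ENNReal.ofReal (b k / lam) :=
    fun k ↦ by
      simp_rw [ENNReal.ofReal_mul (hb k)]
      rw [lintegral_const_mul _ (by fun_prop), ← lintegral_map ENNReal.measurable_ofReal (hEmeas k),
        hEexp k, lintegral_ofReal_expMeasure hlam, ← ENNReal.ofReal_mul (hb k), div_eq_mul_inv]
  have hnonneg : ∀ k, 0 ≤ᵐ[P] fun ω ↦ b k * E k ω := fun k ↦ by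
    filter_upwards [ae_of_ae_map (hEmeas k).aemeasurable
      ((hEexp k).symm ▸ ae_nonneg_expMeasure lam)] with ω hω using mul_nonneg (hb k) hω
  refine ae_summable_of_tsum_lintegral_ne_top (fun k ↦ ((hEmeas k).const_mul _).aemeasurable)
    hnonneg ?_
  rw [tsum_congr hmean, ← ENNReal.ofReal_tsum_of_nonneg (fun k ↦ div_nonneg (hb k) hlam.le)
    (hsum.div_const lam)]
  exact ENNReal.ofReal_ne_top

end ExponentialSeries

theorem stmt3_general
    {Ω : Type*} [MeasurableSpace Ω] (P : Measure Ω) [IsProbabilityMeasure P]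
    (lam : ℝ) (hlam : 0 < lam)
    (E : ℕ → Ω → ℝ)
    (hEmeas : ∀ k, Measurable (E k))
    (hEexp : ∀ k, Measure.map (E k) P = expMeasure lam)
    (hIndep : iIndepFun E P)
    (b : ℕ → ℝ) (hb : ∀ k, 0 ≤ b k) :
    (∀ᵐ ω ∂P, Summable fun k : ℕ => b k * E k ω) ↔ Summable b :=
  ⟨summable_of_ae_summable_mul_of_iIndepFun_expMeasure hlam hEmeas hEexp hIndep hb,
    ae_summable_mul_of_summable_of_map_eq_expMeasure hlam hEmeas hEexp hb⟩

/-- for i.i.d. `Exp(λ)` random variables `(E_k)` and nonnegative reals `(b_k)`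
with `sup_k b_k > 0`, the random series `S(b) = ∑ₖ b_k E_k` converges almost surely
if and only if `∑ₖ b_k` converges. -/
theorem stmt3
    {Ω : Type*} [MeasurableSpace Ω] (P : Measure Ω) [IsProbabilityMeasure P]
    (lam : ℝ) (hlam : 0 < lam)
    (E : ℕ → Ω → ℝ)
    (hEmeas : ∀ k, Measurable (E k))
    (hEexp : ∀ k, Measure.map (E k) P = expMeasure lam)
    (hIndep : iIndepFun E P)
    (b : ℕ → ℝ) (hb : ∀ k, 0 ≤ b k) (hbmax : ∃ k, 0 < b k) :
    (∀ᵐ ω ∂P, Summable fun k : ℕ => b k * E k ω) ↔ Summable b :=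
  stmt3_general P lam hlam E hEmeas hEexp hIndep b hb
end

section
/- If (c̃_j)_{j≥0} is a real sequence with ∑_{j=0}^∞ |c̃_j| < ∞ satisfying s (1 − q^{−j}) c̃_j = ∑_{k=1}^j q^{−k} p_k c̃_{j−k} for every j ≥ 1, then the series φ(x) := ∑_{j=0}^∞ c̃_j e^{−λ s q^{−j} x} converges absolutely for every x > 0, φ is differentiable on (0,∞), the series ∑_{k=1}^∞ p_k ( q^{−k} φ(q^{−k} x) − φ(x) ) converges absolutely for every x > 0, and φ′(x) = λ ∑_{k=1}^∞ p_k ( q^{−k} φ(q^{−k} x) − φ(x) ) for every x > 0. -/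
/-!
Write `a = λ s` and `r = q⁻¹ ≥ 1`, so that `φ(x) = ∑ c̃_j e^{-a r^j x}`. The elementary bound
`t e^{-a t x} ≤ (a x)⁻¹` makes every series in sight absolutely convergent, so `φ` may be
differentiated termwise, giving `φ'(x) = -a ∑ r^j c̃_j e^{-a r^j x}`. Expanding
`∑_k p_k r^k φ(r^k x)` as a double series and summing along the antidiagonals `j + k = n`, the
coefficient of `e^{-a r^n x}` is `∑_{k=1}^n r^k p_k c̃_{n-k} = s (1 - r^n) c̃_n`, by the
recurrence; subtracting `s φ(x)` leaves `-s ∑ r^n c̃_n e^{-a r^n x} = φ'(x) / λ`.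
-/

open Real Finset

theorem Summable.tsum_eq_tsum_sum_antidiagonal {α A : Type*} [AddCommMonoid α]
    [TopologicalSpace α] [ContinuousAdd α] [T3Space α] [AddCommMonoid A] [HasAntidiagonal A]
    {f : A × A → α} (hf : Summable f) :
    ∑' kl, f kl = ∑' n, ∑ kl ∈ antidiagonal n, f kl := by
  have hσ : Summable (f ∘ HasAntidiagonal.sigmaAntidiagonalEquivProd) :=
    HasAntidiagonal.sigmaAntidiagonalEquivProd.summable_iff.mpr hf
  rw [← HasAntidiagonal.sigmaAntidiagonalEquivProd.tsum_eq]
  refine (hσ.tsum_sigma' fun n => (hasSum_fintype _).summable).trans (tsum_congr fun n => ?_)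
  rw [tsum_fintype]
  exact sum_coe_sort (antidiagonal n) f

theorem Finset.sum_Icc_one_eq_sum_range {M : Type*} [AddCommMonoid M] (f : ℕ → M) (n : ℕ) :
    ∑ k ∈ Icc 1 n, f k = ∑ k ∈ range n, f (k + 1) := by
  rw [range_eq_Ico, sum_Ico_add', zero_add, Ico_add_one_right_eq_Icc]

theorem Real.mul_exp_neg_mul_le_inv {a : ℝ} (ha : 0 < a) (t : ℝ) : t * exp (-(a * t)) ≤ a⁻¹ := by
  calc t * exp (-(a * t)) = a⁻¹ * (a * t * exp (-(a * t))) := by field_simp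
    _ ≤ a⁻¹ * 1 := by
        gcongr
        exact (mul_exp_neg_le_exp_neg_one _).trans (exp_le_one_iff.mpr (by norm_num))
    _ = a⁻¹ := mul_one _

noncomputable def expSeries (a r : ℝ) (c : ℕ → ℝ) (x : ℝ) : ℝ :=
  ∑' j, c j * exp (-(a * r ^ j * x))

namespace expSeries

variable {a r x : ℝ} {c : ℕ → ℝ}

theorem summable_abs_term (hc : Summable fun j => |c j|) (ha : 0 ≤ a) (hr : 0 ≤ r)
    (hx : 0 ≤ x) : Summable fun j => |c j * exp (-(a * r ^ j * x))| := by
  refine hc.of_nonneg_of_le (fun j => abs_nonneg _) fun j => ?_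
  rw [abs_mul, abs_of_pos (exp_pos _)]
  exact mul_le_of_le_one_right (abs_nonneg _) (exp_le_one_iff.mpr (neg_nonpos.mpr (by positivity)))

theorem abs_le (hc : Summable fun j => |c j|) (ha : 0 ≤ a) (hr : 1 ≤ r) (hx : 0 ≤ x) :
    |expSeries a r c x| ≤ (∑' j, |c j|) * exp (-(a * x)) := by
  have hterm : ∀ j, |c j * exp (-(a * r ^ j * x))| ≤ |c j| * exp (-(a * x)) := fun j => by
    rw [abs_mul, abs_of_pos (exp_pos _)]
    gcongr
    nlinarith [one_le_pow₀ (n := j) hr, mul_nonneg ha hx]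
  have hsum : Summable fun j => ‖c j * exp (-(a * r ^ j * x))‖ :=
    summable_abs_term hc ha (zero_le_one.trans hr) hx
  calc |expSeries a r c x| ≤ ∑' j, |c j * exp (-(a * r ^ j * x))| := norm_tsum_le_tsum_norm hsum
    _ ≤ ∑' j, |c j| * exp (-(a * x)) := hsum.tsum_le_tsum hterm (hc.mul_right _)
    _ = (∑' j, |c j|) * exp (-(a * x)) := tsum_mul_right

theorem mul_abs_le (hc : Summable fun j => |c j|) (ha : 0 < a) (hr : 1 ≤ r) {t : ℝ} (ht : 0 ≤ t)
    (hx : 0 < x) : t * |expSeries a r c (t * x)| ≤ (∑' j, |c j|) * (a * x)⁻¹ := by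
  calc t * |expSeries a r c (t * x)| ≤ t * ((∑' j, |c j|) * exp (-(a * (t * x)))) := by
        gcongr; exact abs_le hc ha.le hr (by positivity)
    _ = (∑' j, |c j|) * (t * exp (-(a * x * t))) := by ring_nf
    _ ≤ (∑' j, |c j|) * (a * x)⁻¹ := by gcongr; exact mul_exp_neg_mul_le_inv (by positivity) t

theorem abs_pow_mul_term_le (ha : 0 < a) (hr : 0 ≤ r) (hx : 0 < x) (j : ℕ) :
    |r ^ j * c j * exp (-(a * r ^ j * x))| ≤ (a * x)⁻¹ * |c j| := by
  rw [abs_mul, abs_mul, abs_of_nonneg (pow_nonneg hr j), abs_of_pos (exp_pos _)]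
  calc r ^ j * |c j| * exp (-(a * r ^ j * x)) = r ^ j * exp (-(a * x * r ^ j)) * |c j| := by
        ring_nf
    _ ≤ (a * x)⁻¹ * |c j| := by gcongr; exact mul_exp_neg_mul_le_inv (by positivity) _

theorem summable_pow_mul_term (hc : Summable fun j => |c j|) (ha : 0 < a) (hr : 0 ≤ r)
    (hx : 0 < x) : Summable fun j => r ^ j * c j * exp (-(a * r ^ j * x)) :=
  .of_norm_bounded (hc.mul_left _) (abs_pow_mul_term_le ha hr hx)

theorem hasDerivAt (hc : Summable fun j => |c j|) (ha : 0 ≤ a) (hr : 0 ≤ r) (hx : 0 < x) :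
    HasDerivAt (expSeries a r c) (-a * ∑' j, r ^ j * c j * exp (-(a * r ^ j * x))) x := by
  have hderiv : ∀ j y, HasDerivAt (fun z => c j * exp (-(a * r ^ j * z)))
      (c j * (exp (-(a * r ^ j * y)) * -(a * r ^ j))) y := fun j y => by
    simpa using (((hasDerivAt_id y).const_mul (a * r ^ j)).neg.exp).const_mul (c j)
  have hbound : ∀ j, ∀ y ∈ Set.Ioi (x / 2),
      ‖c j * (exp (-(a * r ^ j * y)) * -(a * r ^ j))‖ ≤ |c j| * (x / 2)⁻¹ := fun j y hy => by
    have hμ : 0 ≤ a * r ^ j := by positivity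
    rw [Real.norm_eq_abs, abs_mul, abs_mul, abs_neg, abs_of_pos (exp_pos _), abs_of_nonneg hμ]
    refine mul_le_mul_of_nonneg_left ?_ (abs_nonneg _)
    have hexp : exp (-(a * r ^ j * y)) ≤ exp (-(x / 2 * (a * r ^ j))) :=
      exp_le_exp.mpr (by nlinarith [Set.mem_Ioi.mp hy])
    calc exp (-(a * r ^ j * y)) * (a * r ^ j) ≤ a * r ^ j * exp (-(x / 2 * (a * r ^ j))) := by
          rw [mul_comm]; exact mul_le_mul_of_nonneg_left hexp hμ
      _ ≤ (x / 2)⁻¹ := mul_exp_neg_mul_le_inv (by positivity) _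
  have hxt : x ∈ Set.Ioi (x / 2) := half_lt_self hx
  refine (hasDerivAt_tsum_of_isPreconnected (hc.mul_right _) isOpen_Ioi isPreconnected_Ioi
    (fun j y _ => hderiv j y) hbound hxt (summable_abs_term hc ha hr hx.le).of_abs
    hxt).congr_deriv ?_
  rw [← tsum_mul_left]
  exact tsum_congr fun j => by ring

variable {p : ℕ → ℝ}

theorem summable_mul_dilate (hc : Summable fun j => |c j|) (hp : Summable fun k => p (k + 1))
    (ha : 0 < a) (hr : 1 ≤ r) (hx : 0 < x) :
    Summable fun k => p (k + 1) * (r ^ (k + 1) * expSeries a r c (r ^ (k + 1) * x)) := by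
  refine .of_norm_bounded (hp.abs.mul_right ((∑' j, |c j|) * (a * x)⁻¹)) fun k => ?_
  rw [Real.norm_eq_abs, abs_mul, abs_mul, abs_of_nonneg (pow_nonneg (zero_le_one.trans hr) _)]
  exact mul_le_mul_of_nonneg_left (mul_abs_le hc ha hr (by positivity) hx) (abs_nonneg _)

theorem summable_abs_pantograph (hc : Summable fun j => |c j|)
    (hp : Summable fun k => p (k + 1)) (ha : 0 < a) (hr : 1 ≤ r) (hx : 0 < x) :
    Summable fun k =>
      |p (k + 1) * (r ^ (k + 1) * expSeries a r c (r ^ (k + 1) * x) - expSeries a r c x)| := by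
  simpa only [mul_sub] using
    ((summable_mul_dilate hc hp ha hr hx).sub (hp.mul_right (expSeries a r c x))).abs

theorem tsum_mul_dilate_eq (hc : Summable fun j => |c j|) (hp : Summable fun k => p (k + 1))
    (ha : 0 < a) (hr : 1 ≤ r) (hx : 0 < x) :
    ∑' k, p (k + 1) * (r ^ (k + 1) * expSeries a r c (r ^ (k + 1) * x)) =
      ∑' n, (∑ k ∈ range (n + 1), r ^ (k + 1) * p (k + 1) * c (n - k)) *
        exp (-(a * r ^ (n + 1) * x)) := by
  set F : ℕ × ℕ → ℝ := fun kj =>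
    r ^ (kj.1 + 1) * p (kj.1 + 1) * c kj.2 * exp (-(a * r ^ (kj.1 + kj.2 + 1) * x)) with hF
  have hFsum : Summable F := by
    refine .of_norm_bounded (hp.abs.mul_of_nonneg (hc.mul_left (a * x)⁻¹)
      (fun _ => abs_nonneg _) fun _ => by positivity) fun ⟨k, j⟩ => ?_
    have hdecay : r ^ (k + 1) * exp (-(a * r ^ (k + j + 1) * x)) ≤ (a * x)⁻¹ :=
      calc r ^ (k + 1) * exp (-(a * r ^ (k + j + 1) * x))
          ≤ r ^ (k + j + 1) * exp (-(a * x * r ^ (k + j + 1))) := by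
            rw [mul_right_comm a]; gcongr; omega
        _ ≤ (a * x)⁻¹ := mul_exp_neg_mul_le_inv (by positivity) _
    rw [Real.norm_eq_abs, abs_mul, abs_mul, abs_mul,
      abs_of_nonneg (pow_nonneg (zero_le_one.trans hr) _), abs_of_pos (exp_pos _)]
    calc r ^ (k + 1) * |p (k + 1)| * |c j| * exp (-(a * r ^ (k + j + 1) * x))
        = |p (k + 1)| * (r ^ (k + 1) * exp (-(a * r ^ (k + j + 1) * x)) * |c j|) := by ring
      _ ≤ |p (k + 1)| * ((a * x)⁻¹ * |c j|) := by gcongr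
  have hfiber : ∀ k, ∑' j, F (k, j) =
      p (k + 1) * (r ^ (k + 1) * expSeries a r c (r ^ (k + 1) * x)) := fun k => by
    rw [expSeries, ← tsum_mul_left, ← tsum_mul_left]
    refine tsum_congr fun j => ?_
    have hexp : a * r ^ (k + j + 1) * x = a * r ^ j * (r ^ (k + 1) * x) := by ring
    simp only [hF, hexp]
    ring
  calc ∑' k, p (k + 1) * (r ^ (k + 1) * expSeries a r c (r ^ (k + 1) * x))
      = ∑' k, ∑' j, F (k, j) := tsum_congr fun k => (hfiber k).symm
    _ = ∑' kj, F kj := (hFsum.tsum_prod' hFsum.prod_factor).symm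
    _ = ∑' n, ∑ kj ∈ antidiagonal n, F kj := hFsum.tsum_eq_tsum_sum_antidiagonal
    _ = _ := tsum_congr fun n => by
      rw [Nat.sum_antidiagonal_eq_sum_range_succ_mk, sum_mul]
      refine sum_congr rfl fun k hk => ?_
      have hn : k + (n - k) + 1 = n + 1 := by have := mem_range.mp hk; omega
      simp only [hF, hn]

theorem tsum_pantograph_eq (hc : Summable fun j => |c j|) (hp : Summable fun k => p (k + 1))
    {s : ℝ} (hs : s = ∑' k, p (k + 1))
    (hrec : ∀ j, 1 ≤ j → s * (1 - r ^ j) * c j = ∑ k ∈ Icc 1 j, r ^ k * p k * c (j - k))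
    (ha : 0 < a) (hr : 1 ≤ r) (hx : 0 < x) :
    ∑' k, p (k + 1) * (r ^ (k + 1) * expSeries a r c (r ^ (k + 1) * x) - expSeries a r c x) =
      -(s * ∑' j, r ^ j * c j * exp (-(a * r ^ j * x))) := by
  have hterm := (summable_abs_term hc ha.le (zero_le_one.trans hr) hx.le).of_abs
  have hpow := summable_pow_mul_term hc ha (zero_le_one.trans hr) hx
  have hsplit : ∀ m, s * (1 - r ^ m) * c m * exp (-(a * r ^ m * x)) =
      s * (c m * exp (-(a * r ^ m * x))) - s * (r ^ m * c m * exp (-(a * r ^ m * x))) :=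
    fun m => by ring
  have hcoeff : ∀ n, ∑ k ∈ range (n + 1), r ^ (k + 1) * p (k + 1) * c (n - k) =
      s * (1 - r ^ (n + 1)) * c (n + 1) := fun n => by
    rw [hrec (n + 1) n.succ_pos, sum_Icc_one_eq_sum_range]
    simp only [Nat.add_sub_add_right]
  calc ∑' k, p (k + 1) * (r ^ (k + 1) * expSeries a r c (r ^ (k + 1) * x) - expSeries a r c x)
      = ∑' k, p (k + 1) * (r ^ (k + 1) * expSeries a r c (r ^ (k + 1) * x)) -
          ∑' k, p (k + 1) * expSeries a r c x := by
        simp only [mul_sub]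
        exact (summable_mul_dilate hc hp ha hr hx).tsum_sub (hp.mul_right _)
    _ = ∑' n, s * (1 - r ^ (n + 1)) * c (n + 1) * exp (-(a * r ^ (n + 1) * x)) -
          s * expSeries a r c x := by
        rw [tsum_mul_dilate_eq hc hp ha hr hx, tsum_mul_right, ← hs]
        simp only [hcoeff]
    _ = ∑' m, s * (1 - r ^ m) * c m * exp (-(a * r ^ m * x)) - s * expSeries a r c x := by
        rw [Summable.tsum_eq_zero_add (f := fun m => s * (1 - r ^ m) * c m * exp (-(a * r ^ m * x)))
          (by simpa only [hsplit] using (hterm.mul_left s).sub (hpow.mul_left s))]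
        simp
    _ = -(s * ∑' j, r ^ j * c j * exp (-(a * r ^ j * x))) := by
        rw [tsum_congr hsplit, (hterm.mul_left s).tsum_sub (hpow.mul_left s), tsum_mul_left,
          tsum_mul_left, expSeries]
        ring

end expSeries

theorem stmt9_general
    (lam q : ℝ) (hlam : 0 < lam) (hq0 : 0 < q) (hq1 : q < 1)
    (p : ℕ → ℝ)
    (hpsum : Summable fun k : ℕ => p (k + 1))
    (s : ℝ) (hs : s = ∑' k : ℕ, p (k + 1)) (hs0 : 0 < s)
    (ct : ℕ → ℝ) (hctsum : Summable fun j : ℕ => |ct j|)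
    (hrec : ∀ j : ℕ, 1 ≤ j → s * (1 - q ^ (-(j : ℤ))) * ct j =
      ∑ k ∈ Finset.Icc 1 j, q ^ (-(k : ℤ)) * p k * ct (j - k))
    (φ : ℝ → ℝ) (hφ : ∀ x : ℝ, φ x = ∑' j : ℕ, ct j * Real.exp (-(lam * s * q ^ (-(j : ℤ)) * x))) :
    (∀ x : ℝ, 0 < x →
      Summable fun j : ℕ => |ct j * Real.exp (-(lam * s * q ^ (-(j : ℤ)) * x))|) ∧
    (∀ x : ℝ, 0 < x →
      Summable fun k : ℕ =>
        |p (k + 1) * (q ^ (-((k : ℤ) + 1)) * φ (q ^ (-((k : ℤ) + 1)) * x) - φ x)|) ∧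
    ∀ x : ℝ, 0 < x →
      HasDerivAt φ
        (lam * ∑' k : ℕ, p (k + 1) * (q ^ (-((k : ℤ) + 1)) * φ (q ^ (-((k : ℤ) + 1)) * x) - φ x))
        x := by
  have hpow : ∀ n : ℕ, q ^ (-(n : ℤ)) = q⁻¹ ^ n := fun n => by rw [← inv_zpow', zpow_natCast]
  have hpow_succ : ∀ k : ℕ, q ^ (-((k : ℤ) + 1)) = q⁻¹ ^ (k + 1) := fun k => by
    rw [← Nat.cast_succ, hpow]
  simp only [hpow, hpow_succ] at hrec hφ ⊢
  obtain rfl : φ = expSeries (lam * s) q⁻¹ ct := funext hφ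
  have ha : 0 < lam * s := mul_pos hlam hs0
  have hr : 1 ≤ q⁻¹ := (one_le_inv₀ hq0).mpr hq1.le
  refine ⟨fun x hx => expSeries.summable_abs_term hctsum ha.le (zero_le_one.trans hr) hx.le,
    fun x hx => expSeries.summable_abs_pantograph hctsum hpsum ha hr hx, fun x hx => ?_⟩
  rw [expSeries.tsum_pantograph_eq hctsum hpsum hs hrec ha hr hx]
  refine (expSeries.hasDerivAt hctsum ha.le (zero_le_one.trans hr) hx).congr_deriv ?_
  ring

/-- if an absolutely summable real sequence `(c̃_j)` satisfies the coefficient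
recurrence `s(1-q^{-j}) c̃_j = ∑_{k=1}^j q^{-k} p_k c̃_{j-k}` for all `j ≥ 1`, then the
generalized Dirichlet series `φ(x) = ∑_j c̃_j e^{-λ s q^{-j} x}` converges absolutely for
`x > 0`, `φ` is differentiable on `(0,∞)`, the pantograph series converges absolutely, and
`φ'(x) = λ ∑_{k≥1} p_k (q^{-k} φ(q^{-k} x) - φ(x))` for every `x > 0`. -/
theorem stmt9
    (lam q : ℝ) (hlam : 0 < lam) (hq0 : 0 < q) (hq1 : q < 1)
    (p : ℕ → ℝ) (hpnn : ∀ k, 1 ≤ k → 0 ≤ p k)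
    (hpsum : Summable fun k : ℕ => p (k + 1))
    (s : ℝ) (hs : s = ∑' k : ℕ, p (k + 1)) (hs0 : 0 < s) (hs1 : s ≤ 1)
    (ct : ℕ → ℝ) (hctsum : Summable fun j : ℕ => |ct j|)
    (hrec : ∀ j : ℕ, 1 ≤ j → s * (1 - q ^ (-(j : ℤ))) * ct j =
      ∑ k ∈ Finset.Icc 1 j, q ^ (-(k : ℤ)) * p k * ct (j - k))
    (φ : ℝ → ℝ) (hφ : ∀ x : ℝ, φ x = ∑' j : ℕ, ct j * Real.exp (-(lam * s * q ^ (-(j : ℤ)) * x))) :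
    (∀ x : ℝ, 0 < x →
      Summable fun j : ℕ => |ct j * Real.exp (-(lam * s * q ^ (-(j : ℤ)) * x))|) ∧
    (∀ x : ℝ, 0 < x →
      Summable fun k : ℕ =>
        |p (k + 1) * (q ^ (-((k : ℤ) + 1)) * φ (q ^ (-((k : ℤ) + 1)) * x) - φ x)|) ∧
    ∀ x : ℝ, 0 < x →
      HasDerivAt φ
        (lam * ∑' k : ℕ, p (k + 1) * (q ^ (-((k : ℤ) + 1)) * φ (q ^ (-((k : ℤ) + 1)) * x) - φ x))
        x :=
  stmt9_general lam q hlam hq0 hq1 p hpsum s hs hs0 ct hctsum hrec φ hφ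
end

section
/- If (c̃_j)_{j≥0} is a real sequence with ∑_{j=0}^∞ |c̃_j| < ∞ satisfying s (1 − q^{−j}) c̃_j = ∑_{k=1}^j q^{−k} p_k c̃_{j−k} for every j ≥ 1, then ∑_{j=0}^∞ c̃_j = 0. -/
/-!
Multiplying the `j`-th equation by `q ^ j` turns the recurrence into
`s (b_j - c̃_j) = ∑_{k=0}^{j} p_k b_{j-k}` with `b_j = q^j c̃_j` and `p_0 = 0`, valid for every
`j ≥ 0`. Both sides are absolutely summable in `j`; summing, the right side is the Cauchy product
`(∑ p_k) (∑ b_j) = s ∑ b_j`, which cancels against `s ∑ b_j` on the left, leaving `s ∑ c̃_j = 0`.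
-/

open Finset

theorem tsum_eq_zero_of_mul_sub_eq_cauchyProduct {𝕜 : Type*} [NormedField 𝕜] [CompleteSpace 𝕜]
    {a b c : ℕ → 𝕜} {s : 𝕜} (hs : s ≠ 0) (ha : Summable fun k => ‖a k‖)
    (hb : Summable fun j => ‖b j‖) (hc : Summable c) (ha_tsum : ∑' k, a k = s)
    (hrec : ∀ j, s * (b j - c j) = ∑ k ∈ range (j + 1), a k * b (j - k)) :
    ∑' j, c j = 0 := by
  have hb' : Summable b := hb.of_norm
  have h : s * ∑' j, b j - s * ∑' j, c j = s * ∑' j, b j :=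
    calc s * ∑' j, b j - s * ∑' j, c j
        = ∑' j, s * (b j - c j) := by
          rw [tsum_mul_left, hb'.tsum_sub hc, mul_sub]
      _ = (∑' k, a k) * ∑' j, b j := by
          rw [tsum_congr hrec, tsum_mul_tsum_eq_tsum_sum_range_of_summable_norm ha hb]
      _ = s * ∑' j, b j := by rw [ha_tsum]
  exact (mul_eq_zero.mp (by linear_combination -h)).resolve_left hs

theorem sum_range_succ_ite_zero_mul_eq_sum_Icc {R : Type*} [NonUnitalNonAssocSemiring R]
    (f g : ℕ → R) (j : ℕ) :
    ∑ k ∈ range (j + 1), (if k = 0 then 0 else f k) * g k = ∑ k ∈ Icc 1 j, f k * g k := by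
  rw [range_eq_Ico, sum_eq_sum_Ico_succ_bot (Nat.succ_pos j), if_pos rfl, zero_mul, zero_add]
  exact sum_congr rfl fun k hk => by rw [if_neg (by simp at hk; omega)]

theorem pow_mul_sum_Icc_zpow_neg {q : ℝ} (hq : q ≠ 0) (p c : ℕ → ℝ) (j : ℕ) :
    q ^ j * ∑ k ∈ Icc 1 j, q ^ (-(k : ℤ)) * p k * c (j - k) =
      ∑ k ∈ Icc 1 j, p k * (q ^ (j - k) * c (j - k)) := by
  rw [mul_sum]
  refine sum_congr rfl fun k hk => ?_
  have hkj : k ≤ j := (mem_Icc.mp hk).2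
  rw [zpow_neg, zpow_natCast, ← pow_sub_mul_pow q hkj]
  field_simp

theorem stmt10_general
    (q : ℝ) (hq0 : 0 < q) (hq1 : q < 1)
    (p : ℕ → ℝ)
    (hpsum : Summable fun k : ℕ => p (k + 1))
    (s : ℝ) (hs : s = ∑' k : ℕ, p (k + 1)) (hs0 : 0 < s)
    (ct : ℕ → ℝ) (hctsum : Summable fun j : ℕ => |ct j|)
    (hrec : ∀ j : ℕ, 1 ≤ j → s * (1 - q ^ (-(j : ℤ))) * ct j =
      ∑ k ∈ Finset.Icc 1 j, q ^ (-(k : ℤ)) * p k * ct (j - k)) :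
    ∑' j : ℕ, ct j = 0 := by
  set P : ℕ → ℝ := fun k => if k = 0 then 0 else p k
  have hP : Summable P := (summable_nat_add_iff 1).mp (by simpa [P] using hpsum)
  have hP_tsum : ∑' k, P k = s := by simp [hP.tsum_eq_zero_add, P, hs]
  have hb : Summable fun j => |q ^ j * ct j| := by
    refine hctsum.of_nonneg_of_le (fun _ => abs_nonneg _) fun j => ?_
    rw [abs_mul, abs_of_pos (pow_pos hq0 j)]
    exact mul_le_of_le_one_left (abs_nonneg _) (pow_le_one₀ hq0.le hq1.le)
  refine tsum_eq_zero_of_mul_sub_eq_cauchyProduct (b := fun j => q ^ j * ct j) hs0.ne'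
    (summable_abs_iff.mpr hP) hb hctsum.of_abs hP_tsum fun j => ?_
  rcases Nat.eq_zero_or_pos j with rfl | hj
  · simp [P]
  · simp only [P]
    rw [sum_range_succ_ite_zero_mul_eq_sum_Icc p (fun k => q ^ (j - k) * ct (j - k)),
      ← pow_mul_sum_Icc_zpow_neg hq0.ne', ← hrec j hj, zpow_neg, zpow_natCast]
    field_simp

/-- if an absolutely summable real sequence `(c̃_j)` satisfies the coefficient
recurrence `s(1-q^{-j}) c̃_j = ∑_{k=1}^j q^{-k} p_k c̃_{j-k}` for all `j ≥ 1`, then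
`∑_j c̃_j = 0`. -/
theorem stmt10
    (lam q : ℝ) (hlam : 0 < lam) (hq0 : 0 < q) (hq1 : q < 1)
    (p : ℕ → ℝ) (hpnn : ∀ k, 1 ≤ k → 0 ≤ p k)
    (hpsum : Summable fun k : ℕ => p (k + 1))
    (s : ℝ) (hs : s = ∑' k : ℕ, p (k + 1)) (hs0 : 0 < s) (hs1 : s ≤ 1)
    (ct : ℕ → ℝ) (hctsum : Summable fun j : ℕ => |ct j|)
    (hrec : ∀ j : ℕ, 1 ≤ j → s * (1 - q ^ (-(j : ℤ))) * ct j =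
      ∑ k ∈ Finset.Icc 1 j, q ^ (-(k : ℤ)) * p k * ct (j - k)) :
    ∑' j : ℕ, ct j = 0 :=
  stmt10_general q hq0 hq1 p hpsum s hs hs0 ct hctsum hrec
end

section
/- The sequence defined by c_0 = 1 and c_j = q^{−1} c_{j−1} / (1 − q^{−j}) for j ≥ 1 satisfies c_j = (−1)^j q^{j(j−1)/2} / ∏_{i=1}^j (1 − q^i) for every j ≥ 0, and moreover ∑_{j=0}^∞ c_j q^j = ∏_{i=1}^∞ (1 − q^i), i.e. ∑_{j=0}^∞ (−1)^j q^{j(j+1)/2} / ∏_{i=1}^j (1 − q^i) = ∏_{i=1}^∞ (1 − q^i). -/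
/-!
With `F x = ∑ c_j x^j`, the recurrence `c_{j+1} (1 - q^{j+1}) = -q^j c_j` is exactly the
functional equation `F x = (1 - x) F (q x)`. Iterating it gives
`F q = (∏_{i<n} (1 - q^{i+1})) F (q^{n+1})`, and as `n → ∞` the product tends to `(q;q)_∞`
while `F (q^{n+1}) → F 0 = 1` by dominated convergence, the coefficients being bounded by
`(q;q)_∞⁻¹`.
-/

open Filter Finset Topology

noncomputable def eulerCoeff (q : ℝ) (j : ℕ) : ℝ :=
  (-1) ^ j * q ^ (j * (j - 1) / 2) / ∏ i ∈ range j, (1 - q ^ (i + 1))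

variable {q : ℝ}

lemma summable_norm_neg_pow_succ (hq : |q| < 1) : Summable fun i : ℕ => ‖-q ^ (i + 1)‖ := by
  simpa using (summable_nat_add_iff 1).2 (summable_geometric_of_lt_one (abs_nonneg q) hq)

lemma multipliable_one_sub_pow_of_abs_lt_one (hq : |q| < 1) :
    Multipliable fun i : ℕ => 1 - q ^ (i + 1) := by
  simpa only [sub_eq_add_neg] using multipliable_one_add_of_summable (summable_norm_neg_pow_succ hq)

lemma one_sub_pow_succ_pos (hq0 : 0 ≤ q) (hq1 : q < 1) (i : ℕ) : 0 < 1 - q ^ (i + 1) :=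
  sub_pos.2 (pow_lt_one₀ hq0 hq1 i.succ_ne_zero)

lemma prod_range_one_sub_pow_pos (hq0 : 0 ≤ q) (hq1 : q < 1) (n : ℕ) :
    0 < ∏ i ∈ range n, (1 - q ^ (i + 1)) :=
  prod_pos fun i _ => one_sub_pow_succ_pos hq0 hq1 i

lemma tprod_one_sub_pow_le_prod_range (hq0 : 0 ≤ q) (hq1 : q < 1) (n : ℕ) :
    ∏' i : ℕ, (1 - q ^ (i + 1)) ≤ ∏ i ∈ range n, (1 - q ^ (i + 1)) := by
  have hq : |q| < 1 := by rwa [abs_of_nonneg hq0]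
  refine Antitone.le_of_tendsto (antitone_nat_of_succ_le fun m => ?_)
    (multipliable_one_sub_pow_of_abs_lt_one hq).hasProd.tendsto_prod_nat n
  rw [prod_range_succ]
  exact mul_le_of_le_one_right (prod_range_one_sub_pow_pos hq0 hq1 m).le
    (sub_le_self _ (pow_nonneg hq0 _))

lemma tprod_one_sub_pow_pos (hq0 : 0 ≤ q) (hq1 : q < 1) :
    0 < ∏' i : ℕ, (1 - q ^ (i + 1)) := by
  have hq : |q| < 1 := by rwa [abs_of_nonneg hq0]
  have hne : ∏' i : ℕ, (1 - q ^ (i + 1)) ≠ 0 := by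
    simpa only [sub_eq_add_neg] using tprod_one_add_ne_zero_of_summable
      (fun i => by simpa [← sub_eq_add_neg] using (one_sub_pow_succ_pos hq0 hq1 i).ne')
      (summable_norm_neg_pow_succ hq)
  have hnonneg : 0 ≤ ∏' i : ℕ, (1 - q ^ (i + 1)) :=
    ge_of_tendsto' (multipliable_one_sub_pow_of_abs_lt_one hq).hasProd.tendsto_prod_nat
      fun n => (prod_range_one_sub_pow_pos hq0 hq1 n).le
  exact lt_of_le_of_ne hnonneg hne.symm

@[simp] lemma eulerCoeff_zero (q : ℝ) : eulerCoeff q 0 = 1 := by simp [eulerCoeff]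

lemma eulerCoeff_succ (q : ℝ) (j : ℕ) :
    eulerCoeff q (j + 1) = -(q ^ j * eulerCoeff q j) / (1 - q ^ (j + 1)) := by
  rw [eulerCoeff, eulerCoeff, Nat.triangle_succ, prod_range_succ, pow_add, ← div_div]
  ring

lemma abs_eulerCoeff_le (hq0 : 0 ≤ q) (hq1 : q < 1) (j : ℕ) :
    |eulerCoeff q j| ≤ (∏' i : ℕ, (1 - q ^ (i + 1)))⁻¹ := by
  have hP := prod_range_one_sub_pow_pos hq0 hq1 j
  rw [eulerCoeff, abs_div, abs_mul, abs_pow, abs_neg, abs_one, one_pow, one_mul,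
    abs_of_nonneg (pow_nonneg hq0 _), abs_of_pos hP]
  calc q ^ (j * (j - 1) / 2) / ∏ i ∈ range j, (1 - q ^ (i + 1))
      ≤ 1 / ∏ i ∈ range j, (1 - q ^ (i + 1)) := by gcongr; exact pow_le_one₀ hq0 hq1.le
    _ ≤ (∏' i : ℕ, (1 - q ^ (i + 1)))⁻¹ := by
      rw [one_div]
      exact inv_anti₀ (tprod_one_sub_pow_pos hq0 hq1) (tprod_one_sub_pow_le_prod_range hq0 hq1 j)

lemma summable_eulerCoeff_mul_pow (hq0 : 0 ≤ q) (hq1 : q < 1) {x : ℝ} (hx : |x| < 1) :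
    Summable fun j => eulerCoeff q j * x ^ j := by
  refine Summable.of_norm_bounded ((summable_geometric_of_lt_one (abs_nonneg x) hx).mul_left
    (∏' i : ℕ, (1 - q ^ (i + 1)))⁻¹) fun j => ?_
  rw [norm_mul, norm_pow, Real.norm_eq_abs, Real.norm_eq_abs]
  exact mul_le_mul_of_nonneg_right (abs_eulerCoeff_le hq0 hq1 j) (by positivity)

lemma tsum_eulerCoeff_mul_pow_eq_one_sub_mul (hq0 : 0 ≤ q) (hq1 : q < 1) {x : ℝ}
    (hx : |x| < 1) :
    ∑' j, eulerCoeff q j * x ^ j = (1 - x) * ∑' j, eulerCoeff q j * (q * x) ^ j := by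
  have hqx : |q * x| < 1 := by
    rw [abs_mul, abs_of_nonneg hq0]; nlinarith [abs_nonneg x]
  have hF := summable_eulerCoeff_mul_pow hq0 hq1 hx
  have hG := summable_eulerCoeff_mul_pow hq0 hq1 hqx
  have hdiff : ∀ j, eulerCoeff q (j + 1) * x ^ (j + 1) - eulerCoeff q (j + 1) * (q * x) ^ (j + 1)
      = -x * (eulerCoeff q j * (q * x) ^ j) := fun j => by
    rw [eulerCoeff_succ, mul_pow, mul_pow, ← mul_sub, ← one_sub_mul, ← mul_assoc,
      div_mul_cancel₀ _ (one_sub_pow_succ_pos hq0 hq1 j).ne']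
    ring
  have hsub : ∑' j, eulerCoeff q j * x ^ j - ∑' j, eulerCoeff q j * (q * x) ^ j
      = -x * ∑' j, eulerCoeff q j * (q * x) ^ j := by
    rw [← hF.tsum_sub hG, (hF.sub hG).tsum_eq_zero_add, ← tsum_mul_left]
    simp only [pow_zero, mul_one, sub_self, zero_add, hdiff]
  linear_combination hsub

lemma tsum_eulerCoeff_mul_pow_self_eq_prod_range_mul (hq0 : 0 ≤ q) (hq1 : q < 1) (n : ℕ) :
    ∑' j, eulerCoeff q j * q ^ j =
      (∏ i ∈ range n, (1 - q ^ (i + 1))) * ∑' j, eulerCoeff q j * (q ^ (n + 1)) ^ j := by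
  induction n with
  | zero => simp
  | succ n ih =>
    have hqn : |q ^ (n + 1)| < 1 := by
      rw [abs_of_nonneg (pow_nonneg hq0 _)]; exact pow_lt_one₀ hq0 hq1 n.succ_ne_zero
    rw [ih, tsum_eulerCoeff_mul_pow_eq_one_sub_mul hq0 hq1 hqn, prod_range_succ, ← pow_succ']
    ring

lemma tendsto_tsum_eulerCoeff_mul_pow_pow (hq0 : 0 ≤ q) (hq1 : q < 1) :
    Tendsto (fun n : ℕ => ∑' j, eulerCoeff q j * (q ^ (n + 1)) ^ j) atTop (𝓝 1) := by
  have hlim : Tendsto (fun n : ℕ => q ^ (n + 1)) atTop (𝓝 0) :=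
    (tendsto_pow_atTop_nhds_zero_of_lt_one hq0 hq1).comp (tendsto_add_atTop_nat 1)
  have hterm (j : ℕ) : Tendsto (fun n : ℕ => eulerCoeff q j * (q ^ (n + 1)) ^ j) atTop
      (𝓝 (eulerCoeff q j * 0 ^ j)) :=
    ((continuous_pow j).tendsto 0 |>.comp hlim).const_mul _
  have hbound : ∀ᶠ n : ℕ in atTop, ∀ j,
      ‖eulerCoeff q j * (q ^ (n + 1)) ^ j‖ ≤ (∏' i : ℕ, (1 - q ^ (i + 1)))⁻¹ * q ^ j :=
    Eventually.of_forall fun n j => by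
      rw [norm_mul, norm_pow, Real.norm_eq_abs, Real.norm_eq_abs, abs_of_nonneg (pow_nonneg hq0 _)]
      exact mul_le_mul (abs_eulerCoeff_le hq0 hq1 j)
        (pow_le_pow_left₀ (pow_nonneg hq0 _) (pow_le_of_le_one hq0 hq1.le n.succ_ne_zero) j)
        (by positivity) (inv_nonneg.2 (tprod_one_sub_pow_pos hq0 hq1).le)
  have hsum_zero : ∑' j, eulerCoeff q j * (0 : ℝ) ^ j = 1 := by
    rw [tsum_eq_single 0 fun j hj => by simp [hj]]
    simp
  simpa only [hsum_zero] using tendsto_tsum_of_dominated_convergence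
    ((summable_geometric_of_lt_one hq0 hq1).mul_left _) hterm hbound

theorem tsum_eulerCoeff_mul_pow_self (hq0 : 0 ≤ q) (hq1 : q < 1) :
    ∑' j, eulerCoeff q j * q ^ j = ∏' i : ℕ, (1 - q ^ (i + 1)) := by
  have hq : |q| < 1 := by rwa [abs_of_nonneg hq0]
  have h := (multipliable_one_sub_pow_of_abs_lt_one hq).hasProd.tendsto_prod_nat.mul
    (tendsto_tsum_eulerCoeff_mul_pow_pow hq0 hq1)
  simp only [← tsum_eulerCoeff_mul_pow_self_eq_prod_range_mul hq0 hq1, mul_one] at h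
  exact tendsto_const_nhds_iff.1 h

lemma eq_eulerCoeff_of_recurrence (hq0 : 0 < q) (hq1 : q < 1) {c : ℕ → ℝ} (hc0 : c 0 = 1)
    (hc : ∀ j : ℕ, 1 ≤ j → c j = q⁻¹ * c (j - 1) / (1 - q ^ (-(j : ℤ)))) :
    c = eulerCoeff q := by
  funext j
  induction j with
  | zero => simp [hc0]
  | succ j ih =>
    have hne : 1 - q ^ (j + 1) ≠ 0 := (one_sub_pow_succ_pos hq0.le hq1 j).ne'
    have hne' : q ^ (j + 1) - 1 ≠ 0 := fun h => hne (by linear_combination -h)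
    rw [hc (j + 1) j.succ_pos, Nat.add_sub_cancel, ih, eulerCoeff_succ, zpow_neg, zpow_natCast]
    field_simp
    ring

/-- the recurrence `c_0 = 1`, `c_j = q^{-1} c_{j-1}/(1 - q^{-j})` is solved by
`c_j = (-1)^j q^{j(j-1)/2} / ∏_{i=1}^j (1-q^i)`, and `∑_j c_j q^j = ∏_{i=1}^∞ (1-q^i)`,
i.e. `∑_j (-1)^j q^{j(j+1)/2}/∏_{i=1}^j (1-q^i) = (q;q)_∞`. -/
theorem stmt11
    (q : ℝ) (hq0 : 0 < q) (hq1 : q < 1)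
    (c : ℕ → ℝ) (hc0 : c 0 = 1)
    (hc : ∀ j : ℕ, 1 ≤ j → c j = q⁻¹ * c (j - 1) / (1 - q ^ (-(j : ℤ)))) :
    (∀ j : ℕ, c j = (-1 : ℝ) ^ j * q ^ (j * (j - 1) / 2) /
      ∏ i ∈ Finset.range j, (1 - q ^ (i + 1))) ∧
    (∑' j : ℕ, c j * q ^ j = ∏' i : ℕ, (1 - q ^ (i + 1))) ∧
    (∑' j : ℕ, (-1 : ℝ) ^ j * q ^ (j * (j + 1) / 2) / ∏ i ∈ Finset.range j, (1 - q ^ (i + 1)) =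
      ∏' i : ℕ, (1 - q ^ (i + 1))) := by
  obtain rfl := eq_eulerCoeff_of_recurrence hq0 hq1 hc0 hc
  refine ⟨fun j => rfl, tsum_eulerCoeff_mul_pow_self hq0.le hq1, ?_⟩
  rw [← tsum_eulerCoeff_mul_pow_self hq0.le hq1]
  congr 1
  funext j
  have htri : j * (j + 1) / 2 = j * (j - 1) / 2 + j := by
    rw [mul_comm, ← Nat.triangle_succ, Nat.add_sub_cancel]
  rw [eulerCoeff, htri, pow_add]
  ring
end

section
/- The random series I_q := ∑_{k=0}^∞ q^{S_k} E_{k+1} has finite expectation given by E[I_q] = 1 / ( λ (1 − E[q^{Z_1}]) ), where E[q^{Z_1}] < 1. -/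
/-!
Write `m = E[q^{Z_1}]`. Since `q^{Z_1} ≤ 1 - (1 - q) 1{Z_1 ≥ 1}` and `P(Z_1 ≥ 1) > 0`, `m < 1`.
The `k`-th term `q^{S_k} E_{k+1}` is the product of the independent factors
`q^{Z_1}, …, q^{Z_k}, E_{k+1}`, so its expectation is `m^k / λ`. The terms are nonnegative, so by
monotone convergence `E[I_q]` is the sum of the geometric series `∑ m^k / λ = 1 / (λ (1 - m))`,
which is finite.
-/

open MeasureTheory ProbabilityTheory

abbrev MixType : ℕ ⊕ ℕ → Type := Sum.elim (fun _ => ℕ) (fun _ => ℝ)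

noncomputable def mixMS : ∀ i, MeasurableSpace (MixType i)
  | .inl _ => show MeasurableSpace ℕ from inferInstance
  | .inr _ => show MeasurableSpace ℝ from inferInstance

def mixFam {Ω : Type*} (Z : ℕ → Ω → ℕ) (E : ℕ → Ω → ℝ) : ∀ i, Ω → MixType i
  | .inl i => Z i
  | .inr k => E k

open Real Set Finset ENNReal

section SeriesIntegral

variable {Ω ι : Type*} [MeasurableSpace Ω] {μ : Measure Ω} {f : ι → Ω → ℝ}

lemma tsum_ae_eq_toReal_tsum_ofReal (hnn : ∀ᵐ ω ∂μ, ∀ i, 0 ≤ f i ω) :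
    (fun ω => ∑' i, f i ω) =ᵐ[μ] fun ω => (∑' i, ENNReal.ofReal (f i ω)).toReal := by
  filter_upwards [hnn] with ω hω
  rw [ENNReal.tsum_toReal_eq fun i => ofReal_ne_top]
  simp only [toReal_ofReal (hω _)]

lemma integrable_tsum_of_nonneg [Countable ι] (hf : ∀ i, AEMeasurable (f i) μ)
    (hnn : ∀ᵐ ω ∂μ, ∀ i, 0 ≤ f i ω) (hfin : ∑' i, ∫⁻ ω, ENNReal.ofReal (f i ω) ∂μ ≠ ∞) :
    Integrable (fun ω => ∑' i, f i ω) μ := by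
  have hmeas : AEMeasurable (fun ω => ∑' i, ENNReal.ofReal (f i ω)) μ :=
    .tsum fun i => (hf i).ennreal_ofReal
  refine (integrable_toReal_of_lintegral_ne_top hmeas ?_).congr
    (tsum_ae_eq_toReal_tsum_ofReal hnn).symm
  rwa [lintegral_tsum fun i => (hf i).ennreal_ofReal]

lemma integral_tsum_of_nonneg [Countable ι] (hf : ∀ i, AEMeasurable (f i) μ)
    (hnn : ∀ᵐ ω ∂μ, ∀ i, 0 ≤ f i ω) (hfin : ∑' i, ∫⁻ ω, ENNReal.ofReal (f i ω) ∂μ ≠ ∞) :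
    ∫ ω, ∑' i, f i ω ∂μ = (∑' i, ∫⁻ ω, ENNReal.ofReal (f i ω) ∂μ).toReal := by
  have hmeas : AEMeasurable (fun ω => ∑' i, ENNReal.ofReal (f i ω)) μ :=
    .tsum fun i => (hf i).ennreal_ofReal
  have hlint := lintegral_tsum fun i => (hf i).ennreal_ofReal (μ := μ)
  rw [integral_congr_ae (tsum_ae_eq_toReal_tsum_ofReal hnn),
    integral_toReal hmeas (ae_lt_top' hmeas (hlint ▸ hfin)), hlint]

end SeriesIntegral

section GeneratingFunction

variable {Ω : Type*} [MeasurableSpace Ω] {P : Measure Ω} {X : Ω → ℕ} {q : ℝ}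

lemma integrable_pow_comp [IsFiniteMeasure P] (hX : Measurable X) (hq0 : 0 ≤ q) (hq1 : q ≤ 1) :
    Integrable (fun ω => q ^ X ω) P :=
  .of_bound (measurable_const.pow hX).aestronglyMeasurable 1 <| ae_of_all _ fun ω => by
    rw [norm_of_nonneg (by positivity)]
    exact pow_le_one₀ hq0 hq1

lemma integral_pow_lt_one [IsProbabilityMeasure P] (hX : Measurable X) (hq0 : 0 ≤ q)
    (hq1 : q < 1) (hpos : 0 < P.real {ω | 1 ≤ X ω}) :
    ∫ ω, q ^ X ω ∂P < 1 := by
  set A := {ω | 1 ≤ X ω}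
  have hA : MeasurableSet A := hX (measurableSet_le measurable_const measurable_id)
  have hle : ∀ ω, q ^ X ω ≤ 1 - (1 - q) * A.indicator 1 ω := by
    intro ω
    by_cases hω : ω ∈ A
    · simpa [hω] using pow_le_of_le_one hq0 hq1.le (Nat.one_le_iff_ne_zero.mp hω)
    · simp [hω, show X ω = 0 by simpa [A] using hω]
  calc ∫ ω, q ^ X ω ∂P
      ≤ ∫ ω, 1 - (1 - q) * A.indicator 1 ω ∂P :=
        integral_mono (integrable_pow_comp hX hq0 hq1.le)
          ((integrable_const 1).sub (((integrable_const 1).indicator hA).const_mul _)) hle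
    _ = 1 - (1 - q) * P.real A := by
        rw [integral_sub (integrable_const 1) (((integrable_const 1).indicator hA).const_mul _),
          integral_const_mul, integral_indicator_one hA]
        simp
    _ < 1 := by nlinarith

end GeneratingFunction

lemma ae_nonneg_gammaMeasure (a r : ℝ) : ∀ᵐ x ∂gammaMeasure a r, 0 ≤ x := by
  simp only [ae_iff, not_le]
  change gammaMeasure a r (Iio 0) = 0
  rw [gammaMeasure, withDensity_apply _ measurableSet_Iio]
  exact lintegral_gammaPDF_of_nonpos le_rfl

lemma lintegral_ofReal_gammaMeasure {a r : ℝ} (ha : 0 < a) (hr : 0 < r) :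
    ∫⁻ x, ENNReal.ofReal x ∂gammaMeasure a r = ENNReal.ofReal (a / r) := by
  have hsupp : Function.support (fun x => gammaPDF a r x * ENNReal.ofReal x) ⊆ Ioi 0 := by
    intro x hx
    by_contra hx0
    rw [Set.mem_Ioi, not_lt] at hx0
    rcases hx0.lt_or_eq with hneg | rfl
    · simp [gammaPDF_of_neg hneg] at hx
    · simp at hx
  -- the exponent `a + 1 - 1` is the shape of `integral_rpow_mul_exp_neg_mul_Ioi` at `a + 1`
  have hdensity : ∀ x ∈ Ioi (0 : ℝ), gammaPDF a r x * ENNReal.ofReal x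
      = ENNReal.ofReal (r ^ a / Gamma a * (x ^ (a + 1 - 1) * exp (-(r * x)))) := by
    intro x (hx : 0 < x)
    rw [gammaPDF_of_nonneg hx.le, ← ENNReal.ofReal_mul (by positivity), add_sub_cancel_right,
      rpow_sub_one hx.ne']
    congr 1
    field_simp
  have hintegral :
      ∫ x in Ioi 0, r ^ a / Gamma a * (x ^ (a + 1 - 1) * exp (-(r * x))) = a / r := by
    rw [integral_const_mul, integral_rpow_mul_exp_neg_mul_Ioi (by linarith) hr,
      Gamma_add_one ha.ne', one_div, inv_rpow hr.le, rpow_add_one hr.ne']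
    have := (Gamma_pos_of_pos ha).ne'
    have := (rpow_pos_of_pos hr a).ne'
    field_simp
  have hmeas : Measurable (gammaPDF a r) := (measurable_gammaPDFReal a r).ennreal_ofReal
  rw [gammaMeasure, lintegral_withDensity_eq_lintegral_mul _ hmeas ENNReal.measurable_ofReal]
  simp only [Pi.mul_apply]
  rw [← setLIntegral_eq_of_support_subset hsupp,
    setLIntegral_congr_fun measurableSet_Ioi hdensity, ← ofReal_integral_eq_lintegral_ofReal,
    hintegral]
  · refine Integrable.of_integral_ne_zero ?_
    rw [hintegral]; positivity
  · filter_upwards [self_mem_ae_restrict measurableSet_Ioi] with x (hx : 0 < x)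
    positivity

lemma lintegral_prod_mul_eq_of_iIndepFun_mixFam {Ω : Type*} [MeasurableSpace Ω] {P : Measure Ω}
    {Z : ℕ → Ω → ℕ} {E : ℕ → Ω → ℝ} (hIndep : iIndepFun (m := mixMS) (mixFam Z E) P)
    (hZ : ∀ i, Measurable (Z i)) (hE : ∀ k, Measurable (E k))
    (f : ℕ → ℝ≥0∞) {g : ℝ → ℝ≥0∞} (hg : Measurable g) (s : Finset ℕ) (k : ℕ) :
    ∫⁻ ω, g (E k ω) * ∏ i ∈ s, f (Z i ω) ∂P
      = (∫⁻ ω, g (E k ω) ∂P) * ∏ i ∈ s, ∫⁻ ω, f (Z i ω) ∂P := by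
  let φ : ∀ j, MixType j → ℝ≥0∞ := fun j => match j with
    | .inl _ => f
    | .inr _ => g
  have hφ : ∀ j, Measurable[mixMS j] (φ j) := by
    rintro (i | k)
    · exact measurable_from_nat
    · exact hg
  have hY := lintegral_prod_eq_prod_lintegral_of_indepFun (insert (.inr k) (s.map .inl)) _
    (hIndep.comp φ hφ) fun j => ?_
  · have hk : Sum.inr k ∉ s.map .inl := by simp
    simp only [prod_insert hk, prod_map, Function.comp_apply] at hY
    exact hY
  · rcases j with i | k
    · exact measurable_from_nat.comp (hZ i)
    · exact hg.comp (hE k)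

section Model

variable {Ω : Type*} [MeasurableSpace Ω] {P : Measure Ω} [IsProbabilityMeasure P]
  {Z : ℕ → Ω → ℕ} {E : ℕ → Ω → ℝ} {lam q : ℝ}

lemma lintegral_ofReal_pow_sum_mul_eq (hIndep : iIndepFun (m := mixMS) (mixFam Z E) P)
    (hZ : ∀ i, Measurable (Z i)) (hE : ∀ k, Measurable (E k))
    (hZid : ∀ i, P.map (Z i) = P.map (Z 0)) (hEexp : ∀ k, P.map (E k) = expMeasure lam)
    (hlam : 0 < lam) (hq0 : 0 ≤ q) (hq1 : q ≤ 1) (k : ℕ) :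
    ∫⁻ ω, ENNReal.ofReal (q ^ (∑ i ∈ range k, Z i ω) * E k ω) ∂P
      = ENNReal.ofReal (lam⁻¹ * (∫ ω, q ^ Z 0 ω ∂P) ^ k) := by
  have hZmean (i : ℕ) :
      ∫⁻ ω, ENNReal.ofReal (q ^ Z i ω) ∂P = ENNReal.ofReal (∫ ω, q ^ Z 0 ω ∂P) := by
    rw [ofReal_integral_eq_lintegral_ofReal (integrable_pow_comp (hZ 0) hq0 hq1)
      (ae_of_all _ fun ω => by positivity)]
    exact (IdentDistrib.comp ⟨(hZ i).aemeasurable, (hZ 0).aemeasurable, hZid i⟩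
      (u := fun n => ENNReal.ofReal (q ^ n)) measurable_from_nat).lintegral_eq
  have hEmean : ∫⁻ ω, ENNReal.ofReal (E k ω) ∂P = ENNReal.ofReal lam⁻¹ := by
    rw [(HasLaw.mk (hE k).aemeasurable (hEexp k)).lintegral_comp
      ENNReal.measurable_ofReal.aemeasurable, expMeasure,
      lintegral_ofReal_gammaMeasure one_pos hlam, one_div]
  have hfactor (ω : Ω) : ENNReal.ofReal (q ^ (∑ i ∈ range k, Z i ω) * E k ω)
      = ENNReal.ofReal (E k ω) * ∏ i ∈ range k, ENNReal.ofReal (q ^ Z i ω) := by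
    rw [ENNReal.ofReal_mul (by positivity), ← prod_pow_eq_pow_sum,
      ENNReal.ofReal_prod_of_nonneg fun i _ => by positivity, mul_comm]
  rw [lintegral_congr hfactor, lintegral_prod_mul_eq_of_iIndepFun_mixFam hIndep hZ hE
    (fun n => ENNReal.ofReal (q ^ n)) ENNReal.measurable_ofReal, hEmean,
    prod_congr rfl fun i _ => hZmean i, prod_const, card_range,
    ← ENNReal.ofReal_pow (integral_nonneg fun ω => by positivity),
    ← ENNReal.ofReal_mul (by positivity)]

end Model

lemma tsum_ofReal_mul_geometric {c r : ℝ} (hc : 0 ≤ c) (hr0 : 0 ≤ r) (hr1 : r < 1) :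
    ∑' k : ℕ, ENNReal.ofReal (c * r ^ k) = ENNReal.ofReal (c * (1 - r)⁻¹) := by
  rw [← ENNReal.ofReal_tsum_of_nonneg (fun k => by positivity)
    ((summable_geometric_of_lt_one hr0 hr1).mul_left _), tsum_mul_left,
    tsum_geometric_of_lt_one hr0 hr1]

/-- the random series `I_q = ∑ₖ q^{S_k} E_{k+1}` has finite expectation
`E[I_q] = 1/(λ(1 - E[q^{Z_1}]))`, where `E[q^{Z_1}] < 1`. -/
theorem stmt14
    {Ω : Type*} [MeasurableSpace Ω] (P : Measure Ω) [IsProbabilityMeasure P]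
    (lam q : ℝ) (hlam : 0 < lam) (hq0 : 0 < q) (hq1 : q < 1)
    (Z : ℕ → Ω → ℕ) (E : ℕ → Ω → ℝ)
    (hZmeas : ∀ i, Measurable (Z i))
    (hEmeas : ∀ k, Measurable (E k))
    (hZid : ∀ i, Measure.map (Z i) P = Measure.map (Z 0) P)
    (hEexp : ∀ k, Measure.map (E k) P = expMeasure lam)
    (hIndep : iIndepFun (m := mixMS) (mixFam Z E) P)
    (s : ℝ) (hs : s = (P {ω | 1 ≤ Z 0 ω}).toReal) (hspos : 0 < s)
    (S : ℕ → Ω → ℕ) (hS : ∀ k ω, S k ω = ∑ i ∈ Finset.range k, Z i ω)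
    (Iq : Ω → ℝ) (hIq : ∀ ω, Iq ω = ∑' k : ℕ, q ^ S k ω * E k ω) :
    (∫ ω, q ^ Z 0 ω ∂P) < 1 ∧
    Integrable Iq P ∧
    ∫ ω, Iq ω ∂P = 1 / (lam * (1 - ∫ ω, q ^ Z 0 ω ∂P)) := by
  obtain rfl : S = fun k ω => ∑ i ∈ range k, Z i ω := funext₂ hS
  obtain rfl : Iq = fun ω => ∑' k, q ^ (∑ i ∈ range k, Z i ω) * E k ω := funext hIq
  set m := ∫ ω, q ^ Z 0 ω ∂P
  have hm_lt : m < 1 := integral_pow_lt_one (hZmeas 0) hq0.le hq1 (by rwa [hs] at hspos)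
  have hm_nonneg : 0 ≤ m := integral_nonneg fun ω => by positivity
  have hterm := lintegral_ofReal_pow_sum_mul_eq hIndep hZmeas hEmeas hZid hEexp hlam hq0.le hq1.le
  have hsum := tsum_ofReal_mul_geometric (inv_nonneg.2 hlam.le) hm_nonneg hm_lt
  have hmeas (k : ℕ) : AEMeasurable (fun ω => q ^ (∑ i ∈ range k, Z i ω) * E k ω) P := by
    fun_prop
  have hnonneg : ∀ᵐ ω ∂P, ∀ k, 0 ≤ q ^ (∑ i ∈ range k, Z i ω) * E k ω := by
    refine ae_all_iff.2 fun k => ?_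
    have hlaw : ∀ᵐ x ∂(P.map (E k)), 0 ≤ x := by
      rw [hEexp k]
      exact ae_nonneg_gammaMeasure 1 lam
    filter_upwards [ae_of_ae_map (hEmeas k).aemeasurable hlaw] with ω hω
    positivity
  have hfin : ∑' k, ∫⁻ ω, ENNReal.ofReal (q ^ (∑ i ∈ range k, Z i ω) * E k ω) ∂P ≠ ∞ := by
    rw [tsum_congr hterm, hsum]
    exact ofReal_ne_top
  refine ⟨hm_lt, integrable_tsum_of_nonneg hmeas hnonneg hfin, ?_⟩
  rw [integral_tsum_of_nonneg hmeas hnonneg hfin, tsum_congr hterm, hsum, one_div, mul_inv,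
    toReal_ofReal (by have := sub_pos.2 hm_lt; positivity)]
end

section
/- If ∑_{k=1}^∞ g(k) < ∞, then the random series I^{(g)} := ∑_{k=0}^∞ g(S_k) E_{k+1} is almost surely finite and its law is absolutely continuous with respect to Lebesgue measure; indeed I^{(g)} = g(0) E_1 + Λ where Λ := ∑_{k=1}^∞ g(S_k) E_{k+1} is independent of E_1. -/
/-!
By the strong law of large numbers `S_k / k → E[Z_1] > 1 / N` for some `N`, so almost surely
`S_k ≥ ⌊k / N⌋` for all large `k` and the series is eventually dominated by
`∑ g(⌊k / N⌋) E_{k+1}`. Every value `j` of `⌊k / N⌋` occurs `N` times, so this dominating series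
has finite mean `N (∑ g(j)) / λ` and is almost surely finite. The tail `Λ` is measurable with
respect to `σ(Z, E_2, E_3, …)`, hence independent of `E_1`; the law of `I^{(g)} = Λ + g(0) E_1`
is then a convolution with the law of `g(0) E_1`, which has a density.
-/

open MeasureTheory ProbabilityTheory Filter Finset

lemma Summable.comp_nat_div {f : ℕ → ℝ} (hf : Summable f) (hf0 : 0 ≤ f) (N : ℕ) [NeZero N] :
    Summable fun k => f (k / N) := by
  rw [← (Nat.divModEquiv N).symm.summable_iff]
  have hdiv : ∀ p : ℕ × Fin N, (Nat.divModEquiv N).symm p / N = p.1 := fun p => by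
    simp only [Nat.divModEquiv_symm_apply]
    rw [Nat.mul_comm, Nat.mul_add_div (NeZero.pos N), Nat.div_eq_of_lt p.2.isLt, add_zero]
  simp only [Function.comp_def, hdiv]
  refine (summable_prod_of_nonneg fun p => hf0 p.1).2 ⟨fun _ => .of_finite, ?_⟩
  simpa [tsum_fintype] using hf.mul_left (N : ℝ)

lemma lintegral_ofReal_expMeasure_ne_top {r : ℝ} (hr : 0 < r) :
    ∫⁻ x, ENNReal.ofReal x ∂expMeasure r ≠ ⊤ := by
  have hint : IntegrableOn (fun x : ℝ => r * (x * Real.exp (-(r * x)))) (Set.Ioi 0) := by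
    refine ((integrableOn_rpow_mul_exp_neg_mul_rpow (s := 1) (by norm_num) one_pos hr).congr_fun
      (fun x _ => ?_) measurableSet_Ioi).const_mul r
    simp only [Real.rpow_one, neg_mul]
  have hbound : ∀ x : ℝ, exponentialPDF r x * ENNReal.ofReal x ≤
      (Set.Ioi 0).indicator (fun x => ENNReal.ofReal (r * (x * Real.exp (-(r * x))))) x := by
    intro x
    rcases le_or_gt x 0 with hx | hx
    · simp [ENNReal.ofReal_eq_zero.2 hx]
    · rw [Set.indicator_of_mem (Set.mem_Ioi.2 hx), exponentialPDF_of_nonneg hx.le,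
        ← ENNReal.ofReal_mul (by positivity)]
      exact le_of_eq (by ring_nf)
  refine (lt_of_le_of_lt ?_ hint.lintegral_lt_top).ne
  calc ∫⁻ x, ENNReal.ofReal x ∂expMeasure r
      = ∫⁻ x, exponentialPDF r x * ENNReal.ofReal x :=
        lintegral_withDensity_eq_lintegral_mul _
          (measurable_exponentialPDFReal r).ennreal_ofReal ENNReal.measurable_ofReal
    _ ≤ _ := lintegral_mono hbound
    _ = _ := lintegral_indicator measurableSet_Ioi _

theorem MeasureTheory.Measure.AbsolutelyContinuous.map_const_mul {μ : Measure ℝ}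
    (hμ : μ ≪ volume) {c : ℝ} (hc : c ≠ 0) : μ.map (c * ·) ≪ volume :=
  (hμ.map (measurable_const_mul c)).trans <| by
    rw [Real.map_volume_mul_left hc]; exact Measure.smul_absolutelyContinuous

theorem ProbabilityTheory.iIndepFun.indepFun_of_measurable_iSup_compl {Ω ι γ : Type*}
    {β : ι → Type*} [MeasurableSpace Ω] {P : Measure Ω} [mβ : ∀ i, MeasurableSpace (β i)]
    [MeasurableSpace γ]
    {f : ∀ i, Ω → β i} (hf : ∀ i, Measurable (f i)) (h : iIndepFun f P) (i : ι) {Y : Ω → γ}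
    (hY : Measurable[⨆ j ∈ ({i}ᶜ : Set ι), (mβ j).comap (f j)] Y) :
    IndepFun Y (f i) P := by
  have hindep := indep_biSup_compl (fun j => (hf j).comap_le) h.iIndep ({i}ᶜ : Set ι)
  rw [compl_compl, _root_.iSup_singleton] at hindep
  exact indep_of_indep_of_le_left hindep (measurable_iff_comap_le.1 hY)

theorem ProbabilityTheory.IndepFun.map_add_absolutelyContinuous {Ω M : Type*} [MeasurableSpace Ω]
    {P : Measure Ω} [IsFiniteMeasure P] [AddMonoid M] [MeasurableSpace M] [MeasurableAdd₂ M]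
    {ρ : Measure M} [ρ.IsAddLeftInvariant] {X Y : Ω → M} (hXY : IndepFun X Y P)
    (hX : AEMeasurable X P) (hY : AEMeasurable Y P) (hYρ : P.map Y ≪ ρ) :
    P.map (X + Y) ≪ ρ := by
  rw [hXY.map_add_eq_map_conv_map₀ hX hY]
  exact Measure.conv_absolutelyContinuous hYρ

section

variable {Ω : Type*} [MeasurableSpace Ω] {P : Measure Ω}

lemma ae_nonneg_of_map_eq_expMeasure {X : Ω → ℝ} {r : ℝ} (hX : AEMeasurable X P)
    (h : P.map X = expMeasure r) :
    ∀ᵐ ω ∂P, 0 ≤ X ω := by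
  refine ae_of_ae_map hX ?_
  rw [h, expMeasure, gammaMeasure, ae_withDensity_iff (f := gammaPDF 1 r)
    (measurable_gammaPDFReal 1 r).ennreal_ofReal]
  exact ae_of_all _ fun x hx => not_lt.1 fun hneg => hx (gammaPDF_of_neg hneg)

lemma map_const_mul_absolutelyContinuous_of_map_eq_expMeasure {X : Ω → ℝ} {r c : ℝ}
    (hX : Measurable X) (h : P.map X = expMeasure r) (hc : c ≠ 0) :
    P.map (fun ω => c * X ω) ≪ volume := by
  rw [← Function.comp_def (c * ·), ← Measure.map_map (measurable_const_mul c) hX, h]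
  exact (withDensity_absolutelyContinuous _ _).map_const_mul hc

lemma ae_summable_mul_of_lintegral_le {X : ℕ → Ω → ℝ} {a : ℕ → ℝ} {C : ENNReal}
    (ha : Summable a) (ha0 : ∀ k, 0 ≤ a k) (hX : ∀ k, AEMeasurable (X k) P)
    (hX0 : ∀ᵐ ω ∂P, ∀ k, 0 ≤ X k ω) (hXC : ∀ k, ∫⁻ ω, ENNReal.ofReal (X k ω) ∂P ≤ C)
    (hC : C ≠ ⊤) :
    ∀ᵐ ω ∂P, Summable fun k => a k * X k ω := by
  have hterm : ∀ k, AEMeasurable (fun ω => ENNReal.ofReal (a k) * ENNReal.ofReal (X k ω)) P :=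
    fun k => (hX k).ennreal_ofReal.const_mul _
  have hlint : ∫⁻ ω, ∑' k, ENNReal.ofReal (a k) * ENNReal.ofReal (X k ω) ∂P ≠ ⊤ := by
    rw [lintegral_tsum hterm]
    refine ne_top_of_le_ne_top (b := (∑' k, ENNReal.ofReal (a k)) * C) ?_ ?_
    · rw [← ENNReal.ofReal_tsum_of_nonneg ha0 ha]
      exact ENNReal.mul_ne_top ENNReal.ofReal_ne_top hC
    · calc ∑' k, ∫⁻ ω, ENNReal.ofReal (a k) * ENNReal.ofReal (X k ω) ∂P
          = ∑' k, ENNReal.ofReal (a k) * ∫⁻ ω, ENNReal.ofReal (X k ω) ∂P := by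
            simp_rw [lintegral_const_mul' _ _ ENNReal.ofReal_ne_top]
        _ ≤ ∑' k, ENNReal.ofReal (a k) * C := ENNReal.tsum_le_tsum fun k => by gcongr; exact hXC k
        _ = (∑' k, ENNReal.ofReal (a k)) * C := ENNReal.tsum_mul_right
  filter_upwards [ae_lt_top' (AEMeasurable.tsum hterm) hlint, hX0] with ω hω hω0
  refine (ENNReal.summable_toReal hω.ne).congr fun k => ?_
  rw [← ENNReal.ofReal_mul (ha0 k), ENNReal.toReal_ofReal (mul_nonneg (ha0 k) (hω0 k))]

lemma ae_eventually_div_le_sum_range {Z : ℕ → Ω → ℝ} (hZint : Integrable (Z 0) P)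
    (hZindep : Pairwise (Function.onFun (fun X Y => IndepFun X Y P) Z))
    (hZid : ∀ i, IdentDistrib (Z i) (Z 0) P P) {N : ℕ} (hN : 1 / (N : ℝ) < ∫ ω, Z 0 ω ∂P) :
    ∀ᵐ ω ∂P, ∀ᶠ k in atTop, ((k / N : ℕ) : ℝ) ≤ ∑ i ∈ range k, Z i ω := by
  filter_upwards [strong_law_ae Z hZint hZindep hZid] with ω hω
  filter_upwards [hω.eventually (lt_mem_nhds hN), eventually_gt_atTop 0] with k hk hk0
  have hk : (0 : ℝ) < k := by exact_mod_cast hk0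
  calc ((k / N : ℕ) : ℝ) ≤ k * (1 / N) := by rw [mul_one_div]; exact Nat.cast_div_le
    _ ≤ k * ((k : ℝ)⁻¹ • ∑ i ∈ range k, Z i ω) := by gcongr
    _ = ∑ i ∈ range k, Z i ω := by rw [smul_eq_mul, ← mul_assoc, mul_inv_cancel₀ hk.ne', one_mul]

lemma ae_summable_comp_sum_range_mul {g : ℝ → ℝ} (hgnn : ∀ x, 0 ≤ g x)
    (hganti : AntitoneOn g (Set.Ici 0)) (hgsum : Summable fun j : ℕ => g j)
    {Z : ℕ → Ω → ℝ} (hZint : Integrable (Z 0) P)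
    (hZindep : Pairwise (Function.onFun (fun X Y => IndepFun X Y P) Z))
    (hZid : ∀ i, IdentDistrib (Z i) (Z 0) P P) (hZmean : 0 < ∫ ω, Z 0 ω ∂P)
    {E : ℕ → Ω → ℝ} {C : ENNReal} (hE : ∀ k, AEMeasurable (E k) P)
    (hE0 : ∀ᵐ ω ∂P, ∀ k, 0 ≤ E k ω) (hEC : ∀ k, ∫⁻ ω, ENNReal.ofReal (E k ω) ∂P ≤ C)
    (hC : C ≠ ⊤) :
    ∀ᵐ ω ∂P, Summable fun k => g (∑ i ∈ range k, Z i ω) * E k ω := by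
  obtain ⟨n, hn⟩ := exists_nat_one_div_lt hZmean
  have hN : 1 / ((n + 1 : ℕ) : ℝ) < ∫ ω, Z 0 ω ∂P := by exact_mod_cast hn
  have hdom := ae_summable_mul_of_lintegral_le (hgsum.comp_nat_div (fun j => hgnn j) (n + 1))
    (fun k => hgnn _) hE hE0 hEC hC
  filter_upwards [ae_eventually_div_le_sum_range hZint hZindep hZid hN, hdom, hE0]
    with ω hS hsum hω0
  refine hsum.of_norm_bounded_eventually ?_
  rw [Nat.cofinite_eq_atTop]
  filter_upwards [hS] with k hk
  rw [Real.norm_of_nonneg (mul_nonneg (hgnn _) (hω0 k))]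
  exact mul_le_mul_of_nonneg_right
    (hganti (Set.mem_Ici.2 (Nat.cast_nonneg _)) (Set.mem_Ici.2 ((Nat.cast_nonneg _).trans hk)) hk)
    (hω0 k)

end

lemma measurable_iSup_compl_tsum {g : ℝ → ℝ} (hganti : AntitoneOn g (Set.Ici 0))
    {Ω : Type*} {Z E : ℕ → Ω → ℝ} (hZnn : ∀ i ω, 0 ≤ Z i ω) :
    Measurable[⨆ j ∈ ({Sum.inr 0}ᶜ : Set (ℕ ⊕ ℕ)),
        MeasurableSpace.comap (Sum.elim Z E j) inferInstance]
      fun ω => ∑' k : ℕ, g (∑ i ∈ range (k + 1), Z i ω) * E (k + 1) ω := by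
  set M := ⨆ j ∈ ({Sum.inr 0}ᶜ : Set (ℕ ⊕ ℕ)),
    MeasurableSpace.comap (Sum.elim Z E j) inferInstance
  have hcomp : ∀ j ≠ Sum.inr 0, Measurable[M] (Sum.elim Z E j) := fun j hj =>
    measurable_iff_comap_le.2 (le_biSup (fun j => MeasurableSpace.comap (Sum.elim Z E j) _) hj)
  have hgmax : Measurable fun x : ℝ => g (max x 0) := by
    refine Antitone.measurable fun x y hxy => hganti (le_max_right x 0) (le_max_right y 0) ?_
    exact max_le_max hxy le_rfl
  refine Measurable.tsum fun k => Measurable.mul ?_ (hcomp (Sum.inr (k + 1)) (by simp))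
  have hS : Measurable[M] fun ω => ∑ i ∈ range (k + 1), Z i ω :=
    Finset.measurable_sum _ fun i _ => hcomp (Sum.inl i) (by simp)
  have hmax : (fun ω => g (∑ i ∈ range (k + 1), Z i ω)) =
      fun ω => g (max (∑ i ∈ range (k + 1), Z i ω) 0) :=
    funext fun ω => by rw [max_eq_left (Finset.sum_nonneg fun i _ => hZnn i ω)]
  rw [hmax]
  exact hgmax.comp hS

/-- if `∑_{k≥1} g(k) < ∞` then `I^{(g)} = ∑ₖ g(S_k) E_{k+1}` is a.s. finite
and its law is absolutely continuous with respect to Lebesgue measure; indeed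
`I^{(g)} = g(0) E_1 + Λ` where `Λ = ∑_{k≥1} g(S_k) E_{k+1}` is independent of `E_1`. -/
theorem stmt18
    {Ω : Type*} [MeasurableSpace Ω] (P : Measure Ω) [IsProbabilityMeasure P]
    (lam : ℝ) (hlam : 0 < lam)
    (g : ℝ → ℝ) (hgnn : ∀ x, 0 ≤ g x) (hganti : AntitoneOn g (Set.Ici 0))
    (hg0 : 0 < g 0)
    (hgsum : Summable fun k : ℕ => g ((k : ℝ) + 1))
    (Z : ℕ → Ω → ℝ) (E : ℕ → Ω → ℝ)
    (hZmeas : ∀ i, Measurable (Z i))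
    (hEmeas : ∀ k, Measurable (E k))
    (hZnn : ∀ i, ∀ ω, 0 ≤ Z i ω)
    (hZid : ∀ i, Measure.map (Z i) P = Measure.map (Z 0) P)
    (hZint : Integrable (Z 0) P) (hZmean : 0 < ∫ ω, Z 0 ω ∂P)
    (hEexp : ∀ k, Measure.map (E k) P = expMeasure lam)
    (hIndep : iIndepFun (Sum.elim Z E) P)
    (S : ℕ → Ω → ℝ) (hS : ∀ k ω, S k ω = ∑ i ∈ Finset.range k, Z i ω)
    (Ig : Ω → ℝ) (hIg : ∀ ω, Ig ω = ∑' k : ℕ, g (S k ω) * E k ω)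
    (L : Ω → ℝ) (hL : ∀ ω, L ω = ∑' k : ℕ, g (S (k + 1) ω) * E (k + 1) ω) :
    (∀ᵐ ω ∂P, Summable fun k : ℕ => g (S k ω) * E k ω) ∧
    (∀ᵐ ω ∂P, Ig ω = g 0 * E 0 ω + L ω) ∧
    IndepFun L (E 0) P ∧
    (Measure.map Ig P).AbsolutelyContinuous (volume : Measure ℝ) := by
  have hE0 : ∀ᵐ ω ∂P, ∀ k, 0 ≤ E k ω :=
    ae_all_iff.2 fun k => ae_nonneg_of_map_eq_expMeasure (hEmeas k).aemeasurable (hEexp k)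
  have hgnat : Summable fun j : ℕ => g j := (summable_nat_add_iff 1).1 (by exact_mod_cast hgsum)
  have hsummable : ∀ᵐ ω ∂P, Summable fun k : ℕ => g (S k ω) * E k ω := by
    simp only [hS]
    exact ae_summable_comp_sum_range_mul hgnn hganti hgnat hZint
      (fun i j hij => hIndep.indepFun (Sum.inl_injective.ne hij))
      (fun i => ⟨(hZmeas i).aemeasurable, (hZmeas 0).aemeasurable, hZid i⟩) hZmean
      (fun k => (hEmeas k).aemeasurable) hE0
      (fun k => by rw [← lintegral_map ENNReal.measurable_ofReal (hEmeas k), hEexp k])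
      (lintegral_ofReal_expMeasure_ne_top hlam)
  have hsplit : ∀ᵐ ω ∂P, Ig ω = g 0 * E 0 ω + L ω := by
    filter_upwards [hsummable] with ω hω
    rw [hIg, hL, hω.tsum_eq_zero_add, hS 0, Finset.sum_range_zero]
  have hZEmeas : ∀ j, Measurable (Sum.elim Z E j) := Sum.rec hZmeas hEmeas
  have hLeq : L = fun ω => ∑' k : ℕ, g (∑ i ∈ Finset.range (k + 1), Z i ω) * E (k + 1) ω :=
    funext fun ω => by rw [hL]; simp only [hS]
  have hLmeas := hLeq ▸ measurable_iSup_compl_tsum hganti (E := E) hZnn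
  have hindep : IndepFun L (E 0) P :=
    hIndep.indepFun_of_measurable_iSup_compl hZEmeas (Sum.inr 0) hLmeas
  refine ⟨hsummable, hsplit, hindep, ?_⟩
  rw [Measure.map_congr (hsplit.mono fun ω h => h.trans (add_comm _ _))]
  exact (hindep.comp measurable_id (measurable_const_mul _)).map_add_absolutelyContinuous
    (hLmeas.mono (iSup₂_le fun j _ => (hZEmeas j).comap_le) le_rfl).aemeasurable
    ((hEmeas 0).const_mul _).aemeasurable
    (map_const_mul_absolutelyContinuous_of_map_eq_expMeasure (hEmeas 0) (hEexp 0) hg0.ne')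
end
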